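/- Let K be a field, R a positive totally ordered aura with tempered growth, and |·| : K → R a multiplicative seminorm. If there exists x ∈ K with 0 < |x| < 1, then there exists u ∈ K with |u| > 1 + 1 (the element 2 of R). -/

import Mathlib

/-!
If `0 < |x| < 1` then `|x⁻¹| > 1`. Were every value of `|·|` at most `2`, the powers
`|x⁻¹|ⁿ = |x⁻¹ ^ n|` would be bounded by the constant polynomial `2`, and tempered growth
would force `|x⁻¹| ≤ 1`.
-/

def TemperedGrowth (R : Type*) [Semiring R] [LE R] : Prop :=
  ∀ P : Polynomial ℕ, P ≠ 0 → ∀ x : R, (∀ n : ℕ, x ^ n ≤ ((P.eval n : ℕ) : R)) → x ≤ 1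

theorem TemperedGrowth.le_one_of_pow_le_natCast {R : Type*} [Semiring R] [LE R]
    (h : TemperedGrowth R) {c : ℕ} (hc : c ≠ 0) {x : R} (hx : ∀ n : ℕ, x ^ n ≤ c) :
    x ≤ 1 :=
  h (Polynomial.C c) (Polynomial.C_ne_zero.mpr hc) x (by simpa using hx)

theorem one_lt_inv_of_lt_one_of_monotone_mul {R : Type*} [Semifield R] [LinearOrder R]
    {a : R} (hmono : Monotone (a * ·)) (ha0 : a ≠ 0) (ha1 : a < 1) : 1 < a⁻¹ := by
  by_contra! hinv
  have : a * a⁻¹ ≤ a * 1 := hmono hinv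
  rw [mul_inv_cancel₀ ha0, mul_one] at this
  exact ha1.not_ge this

theorem tempered_mult_seminorm_exists_big_value_general {K : Type*} [Field K]
    {R : Type*} [Semifield R] [LinearOrder R]
    (hmul : ∀ x y z t : R, x ≤ z → y ≤ t → x * y ≤ z * t)
    (htemp : ∀ P : Polynomial ℕ, P ≠ 0 →
      ∀ x : R, (∀ n : ℕ, x ^ n ≤ ((P.eval n : ℕ) : R)) → x ≤ 1)
    (f : K → R)
    (hf0 : f 0 = 0) (hf1 : f 1 = 1)
    (hfm : ∀ a b : K, f (a * b) = f a * f b)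
    (hx : ∃ x : K, 0 < f x ∧ f x < 1) :
    ∃ u : K, (1 : R) + 1 < f u := by
  obtain ⟨x, hx0, hx1⟩ := hx
  let φ : K →*₀ R := { toFun := f, map_zero' := hf0, map_one' := hf1, map_mul' := hfm }
  have hinv : 1 < f x⁻¹ := by
    rw [show f x⁻¹ = (f x)⁻¹ from map_inv₀ φ x]
    exact one_lt_inv_of_lt_one_of_monotone_mul (fun _ _ h ↦ hmul _ _ _ _ le_rfl h)
      hx0.ne' hx1
  by_contra! hbounded
  refine hinv.not_ge (TemperedGrowth.le_one_of_pow_le_natCast htemp two_ne_zero fun n ↦ ?_)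
  rw [← one_add_one_eq_two, Nat.cast_add, Nat.cast_one]
  exact (map_pow φ x⁻¹ n).symm.trans_le (hbounded _)

/-- If a tempered multiplicative seminorm on a field takes a value strictly between
`0` and `1`, then it also takes a value strictly greater than `2 = 1 + 1`. -/
theorem tempered_mult_seminorm_exists_big_value {K : Type*} [Field K]
    {R : Type*} [Semifield R] [LinearOrder R]
    (hadd : ∀ x y z t : R, x ≤ z → y ≤ t → x + y ≤ z + t)
    (hmul : ∀ x y z t : R, x ≤ z → y ≤ t → x * y ≤ z * t)
    (hpos : (0 : R) < 1)
    (htemp : ∀ P : Polynomial ℕ, P ≠ 0 →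
      ∀ x : R, (∀ n : ℕ, x ^ n ≤ ((P.eval n : ℕ) : R)) → x ≤ 1)
    (f : K → R)
    (hf0 : f 0 = 0) (hf1 : f 1 = 1)
    (hfm : ∀ a b : K, f (a * b) = f a * f b)
    (hfa : ∀ a b : K, f (a + b) ≤ f a + f b)
    (hx : ∃ x : K, 0 < f x ∧ f x < 1) :
    ∃ u : K, (1 : R) + 1 < f u :=
  tempered_mult_seminorm_exists_big_value_general hmul htemp f hf0 hf1 hfm hx
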